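/- Let K be a field, a ∈ K, m ≥ −1 and p ≥ 1 integers, and let g = ∑_{n≥0} g_n x^n be a formal power series over K with g_0 = 1. Let f = ∑_{n≥0} f_n x^n satisfy f · (1 − a x^p g) = 1, and set f_n = 0 for n < 0 and g_n = 0 for n < 0. Then: (i) det(f_{i+j−m})_{i,j=0}^{n} = 0 for 0 ≤ n < m; (ii) det(f_{i+j−m})_{i,j=0}^{m} = (−1)^{\binom{m+1}{2}} (when m ≥ 0); (iii) for every n ≥ 1, det(f_{i+j−m})_{i,j=0}^{n+m} = (−1)^{\binom{m+1}{2}} · a^n · det(g_{i+j+m−p+2})_{i,j=0}^{n−1}. -/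

import Mathlib

/-!
Multiplying the Hankel matrix `(f_{i+j-m})` on the right by the unitriangular Toeplitz matrix of
`u = 1 - a x^p g` does not change its determinant, and turns each entry into a truncated
convolution `∑_{s ≤ l} f_{i+l-m-s} u_s`. In the first `m + 1` rows nothing is truncated, so
`f u = 1` leaves an anti-diagonal unit block followed by zeros. In the remaining rows the missing
tail of the convolution equals `a ∑_t f_{r-t} g_{l+1+t-p}`, so the lower right block factors as
the unitriangular matrix `(f_{r-t})` times `a (g_{t+c+m+2-p})`.
-/

open Finset Matrix PowerSeries

namespace Matrix

theorem det_antidiagonal {R : Type*} [CommRing R] (k : ℕ) :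
    det (of fun i j : Fin k => if (i : ℕ) + j + 1 = k then (1 : R) else 0) =
      (-1) ^ k.choose 2 := by
  induction k with
  | zero => simp
  | succ k ih =>
    rw [det_succ_row_zero, sum_eq_single (Fin.last k)]
    · have hminor : (of fun i j : Fin (k + 1) =>
            if (i : ℕ) + j + 1 = k + 1 then (1 : R) else 0).submatrix Fin.succ
              (Fin.last k).succAbove =
          of fun i j : Fin k => if (i : ℕ) + j + 1 = k then 1 else 0 := by
        ext i j
        simp [Fin.succAbove_last, add_right_comm]
      rw [hminor, ih, Nat.choose_succ_succ, Nat.choose_one_right, pow_add]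
      simp
    · intro j _ hj
      have hj' : (0 : ℕ) + j + 1 ≠ k + 1 := fun h =>
        hj (Fin.ext (by simp only [Fin.val_last]; omega))
      rw [of_apply, Fin.val_zero, if_neg hj', mul_zero, zero_mul]
    · simp

end Matrix

namespace PowerSeries

variable {R : Type*} [CommRing R]

noncomputable def intCoeff (φ : R⟦X⟧) (n : ℤ) : R :=
  if 0 ≤ n then coeff n.toNat φ else 0

@[simp]
theorem intCoeff_natCast (φ : R⟦X⟧) (n : ℕ) : intCoeff φ n = coeff n φ := by
  simp [intCoeff]

theorem intCoeff_of_neg (φ : R⟦X⟧) {n : ℤ} (hn : n < 0) : intCoeff φ n = 0 :=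
  if_neg (by omega)

theorem intCoeff_one (n : ℤ) : intCoeff (1 : R⟦X⟧) n = if n = 0 then 1 else 0 := by
  rcases lt_or_ge n 0 with hn | hn
  · rw [intCoeff_of_neg _ hn, if_neg hn.ne]
  · lift n to ℕ using hn
    simp [coeff_one]

theorem intCoeff_C_mul_X_pow_mul (a : R) (p : ℕ) (g : R⟦X⟧) (n : ℤ) :
    intCoeff (C a * X ^ p * g) n = a * intCoeff g (n - p) := by
  rcases lt_or_ge n p with hn | hn
  · rw [intCoeff_of_neg g (by omega), mul_zero]
    rcases lt_or_ge n 0 with hn0 | hn0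
    · exact intCoeff_of_neg _ hn0
    · lift n to ℕ using hn0
      rw [intCoeff_natCast, mul_assoc, coeff_C_mul, coeff_X_pow_mul', if_neg (by omega),
        mul_zero]
  · lift n to ℕ using by omega
    rw [intCoeff_natCast, mul_assoc, coeff_C_mul, coeff_X_pow_mul', if_pos (by omega),
      ← Nat.cast_sub (by omega), intCoeff_natCast]

theorem sum_range_intCoeff_mul_coeff (φ ψ : R⟦X⟧) {k : ℤ} {S : ℕ} (hk : k ≤ S) :
    ∑ s ∈ range (S + 1), intCoeff φ (k - s) * coeff s ψ = intCoeff (φ * ψ) k := by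
  rcases lt_or_ge k 0 with hk0 | hk0
  · rw [intCoeff_of_neg _ hk0]
    exact sum_eq_zero fun s _ => by rw [intCoeff_of_neg _ (by omega), zero_mul]
  lift k to ℕ using hk0
  rw [← sum_subset (range_subset_range.2 (by omega : k + 1 ≤ S + 1)), intCoeff_natCast,
    mul_comm, coeff_mul,
    Nat.sum_antidiagonal_eq_sum_range_succ (fun i j => coeff i ψ * coeff j φ)]
  · refine sum_congr rfl fun s hs => ?_
    rw [mem_range] at hs
    rw [← Nat.cast_sub (by omega), intCoeff_natCast, mul_comm]
  · intro s _ hs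
    rw [mem_range] at hs
    rw [intCoeff_of_neg _ (by omega), zero_mul]

theorem sum_range_intCoeff_mul_coeff_one_sub {f v : R⟦X⟧} (hf : f * (1 - v) = 1) (r l : ℕ) :
    ∑ s ∈ range (l + 1), intCoeff f ((r + l + 1 : ℕ) - s) * coeff s (1 - v) =
      ∑ t ∈ range (r + 1), intCoeff f (r - t) * coeff (l + 1 + t) v := by
  have h := sum_range_intCoeff_mul_coeff f (1 - v) (le_refl ((r + l + 1 : ℕ) : ℤ))
  rw [hf, intCoeff_one, if_neg (by omega), show r + l + 1 + 1 = (l + 1) + (r + 1) by omega,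
    sum_range_add] at h
  have htail : ∀ t ∈ range (r + 1),
      intCoeff f ((r + l + 1 : ℕ) - ((l + 1 + t : ℕ) : ℤ)) * coeff (l + 1 + t) (1 - v) =
        -(intCoeff f (r - t) * coeff (l + 1 + t) v) := fun t _ => by
    rw [map_sub, coeff_one, if_neg (by omega), show ((r + l + 1 : ℕ) : ℤ) - (l + 1 + t : ℕ) =
      r - t by push_cast; ring]
    ring
  rw [sum_congr rfl htail, sum_neg_distrib] at h
  linear_combination h

theorem det_of_intCoeff_sub (φ : R⟦X⟧) (n : ℕ) :
    det (of fun i j : Fin n => intCoeff φ (i - j)) = constantCoeff φ ^ n := by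
  have hlower : (of fun i j : Fin n => intCoeff φ (i - j)).IsLowerTriangular :=
    fun i j hij => intCoeff_of_neg φ (by change (i : ℕ) < j at hij; omega)
  rw [det_of_isLowerTriangular _ hlower]
  simp [intCoeff]

noncomputable def upperToeplitz (u : R⟦X⟧) (N : ℕ) : Matrix (Fin N) (Fin N) R :=
  of fun j l => if j ≤ l then coeff (l - j : ℕ) u else 0

theorem det_upperToeplitz (u : R⟦X⟧) (N : ℕ) :
    (upperToeplitz u N).det = constantCoeff u ^ N := by
  have hupper : (upperToeplitz u N).IsUpperTriangular := fun i j hij => if_neg (not_le.2 hij)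
  rw [det_of_isUpperTriangular hupper]
  simp [upperToeplitz]

theorem hankel_mul_upperToeplitz_apply (c : ℤ → R) (m : ℤ) (u : R⟦X⟧) {N : ℕ}
    (i l : Fin N) :
    ((of fun i j : Fin N => c (i + j - m)) * upperToeplitz u N) i l =
      ∑ s ∈ range (l + 1), c (i + l - m - s) * coeff s u := by
  calc _ = ∑ j ∈ range N,
          c (i + j - m) * if j ≤ (l : ℕ) then coeff (l - j : ℕ) u else 0 := by
        simp only [mul_apply, of_apply, upperToeplitz, Fin.le_def]
        exact Fin.sum_univ_eq_sum_range
          (fun j => c (i + j - m) * if j ≤ (l : ℕ) then coeff (l - j : ℕ) u else 0) N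
    _ = ∑ j ∈ range (l + 1), c (i + j - m) * coeff (l - j : ℕ) u := by
        refine (sum_subset (range_subset_range.2 l.isLt) fun j _ hj => ?_).symm.trans
          (sum_congr rfl fun j hj => ?_)
        · rw [mem_range] at hj
          rw [if_neg (by omega), mul_zero]
        · rw [mem_range] at hj
          rw [if_pos (by omega)]
    _ = _ := by
        rw [← sum_range_reflect]
        refine sum_congr rfl fun s hs => ?_
        rw [mem_range] at hs
        rw [show (l : ℕ) - (l + 1 - 1 - s) = s by omega, Nat.cast_sub (by omega)]
        push_cast
        ring_nf

theorem hankel_intCoeff_mul_upperToeplitz_apply_of_le {f u : R⟦X⟧} (hf : f * u = 1) {m : ℤ}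
    {N : ℕ} {i : Fin N} (hi : (i : ℤ) ≤ m) (l : Fin N) :
    ((of fun i j : Fin N => intCoeff f (i + j - m)) * upperToeplitz u N) i l =
      if (i : ℤ) + l = m then 1 else 0 := by
  rw [hankel_mul_upperToeplitz_apply, sum_range_intCoeff_mul_coeff _ _ (by omega), hf,
    intCoeff_one]
  exact if_congr (by omega) rfl rfl

theorem hankel_intCoeff_mul_upperToeplitz_one_sub_apply {f v : R⟦X⟧} (hf : f * (1 - v) = 1)
    {m : ℤ} {N : ℕ} {i : Fin N} {r : ℕ} (hi : (i : ℤ) = m + 1 + r) (l : Fin N) :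
    ((of fun i j : Fin N => intCoeff f (i + j - m)) * upperToeplitz (1 - v) N :
        Matrix (Fin N) (Fin N) R) i l =
      ∑ t ∈ range (r + 1), intCoeff f (r - t) * coeff (l + 1 + t) v := by
  rw [hankel_mul_upperToeplitz_apply, ← sum_range_intCoeff_mul_coeff_one_sub hf]
  refine sum_congr rfl fun s _ => ?_
  rw [hi]
  push_cast
  ring_nf

theorem det_hankel_intCoeff_of_mul_one_sub {f v : R⟦X⟧} (hv : constantCoeff v = 0)
    (hf : f * (1 - v) = 1) {m : ℤ} (hm : -1 ≤ m) (n : ℕ) :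
    det (of fun i j : Fin ((m + 1).toNat + n) => intCoeff f (i + j - m)) =
      (-1) ^ (m + 1).toNat.choose 2 *
        det (of fun i j : Fin n => intCoeff v (i + j + m + 2)) := by
  obtain ⟨M, hM⟩ : ∃ M : ℕ, (m + 1).toNat = M := ⟨_, rfl⟩
  have hMm : (M : ℤ) = m + 1 := by omega
  rw [hM]
  set B := ((of fun i j : Fin (M + n) => intCoeff f (i + j - m)) *
    upperToeplitz (1 - v) (M + n)).submatrix finSumFinEquiv finSumFinEquiv
  have htop (i : Fin M) (b) : B (Sum.inl i) b =
      if (i : ℤ) + (finSumFinEquiv b : Fin (M + n)) = m then 1 else 0 :=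
    hankel_intCoeff_mul_upperToeplitz_apply_of_le hf
      (by simp only [finSumFinEquiv_apply_left, Fin.val_castAdd]; omega) _
  have hbot (r : Fin n) (b) : B (Sum.inr r) b = ∑ t ∈ range (r + 1),
      intCoeff f (r - t) * coeff ((finSumFinEquiv b : Fin (M + n)) + 1 + t) v :=
    hankel_intCoeff_mul_upperToeplitz_one_sub_apply hf
      (by simp only [finSumFinEquiv_apply_right, Fin.val_natAdd]; omega) _
  have h₁₁ :
      B.toBlocks₁₁ = of fun i j : Fin M => if (i : ℕ) + j + 1 = M then 1 else 0 := by
    ext i j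
    simp only [toBlocks₁₁, of_apply, htop, finSumFinEquiv_apply_left, Fin.val_castAdd]
    exact if_congr (by omega) rfl rfl
  have h₁₂ : B.toBlocks₁₂ = 0 := by
    ext i c
    simp only [toBlocks₁₂, of_apply, htop, finSumFinEquiv_apply_right, Fin.val_natAdd,
      Matrix.zero_apply]
    exact if_neg (by omega)
  have h₂₂ : B.toBlocks₂₂ = (of fun r t : Fin n => intCoeff f (r - t)) *
      of fun t c : Fin n => intCoeff v (t + c + m + 2) := by
    ext r c
    have hlower (t : ℕ) (ht : r < t) : intCoeff f (r - t) * intCoeff v (t + c + m + 2) = 0 := by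
      rw [intCoeff_of_neg _ (by omega), zero_mul]
    simp only [toBlocks₂₂, of_apply, hbot, mul_apply]
    rw [Fin.sum_univ_eq_sum_range (fun t => intCoeff f (r - t) * intCoeff v (t + c + m + 2)),
      ← sum_subset (range_subset_range.2 r.isLt) fun t _ ht => hlower t (by simpa using ht)]
    refine sum_congr rfl fun t _ => ?_
    rw [show (t : ℤ) + c + m + 2 = (M + c + 1 + t : ℕ) by push_cast; omega, intCoeff_natCast]
    simp
  have hf0 : constantCoeff f = 1 := by simpa [hv] using congrArg constantCoeff hf
  calc _ = det B := by
        rw [det_submatrix_equiv_self, det_mul, det_upperToeplitz, map_sub, map_one, hv, sub_zero,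
          one_pow, mul_one]
    _ = det B.toBlocks₁₁ * det B.toBlocks₂₂ := by
        conv_lhs => rw [← fromBlocks_toBlocks B, h₁₂]
        exact det_fromBlocks_zero₁₂ _ _ _
    _ = _ := by
        rw [h₁₁, h₂₂, det_antidiagonal, det_mul, det_of_intCoeff_sub, hf0, one_pow, one_mul]

end PowerSeries

theorem hankel_lemma_cfrac_step_general {K : Type*} [Field K] (a : K) (m : ℤ) (hm : -1 ≤ m)
    (p : ℕ) (hp : 1 ≤ p) (f g : PowerSeries K)
    (hf : f * (1 - PowerSeries.C a * PowerSeries.X ^ p * g) = 1)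
    (f' g' : ℤ → K)
    (hf' : ∀ n : ℤ, f' n = if 0 ≤ n then PowerSeries.coeff n.toNat f else 0)
    (hg' : ∀ n : ℤ, g' n = if 0 ≤ n then PowerSeries.coeff n.toNat g else 0) :
    (∀ n : ℕ, (n : ℤ) < m →
      Matrix.det (Matrix.of fun i j : Fin (n + 1) =>
        f' ((i : ℤ) + (j : ℤ) - m)) = 0) ∧
    (0 ≤ m →
      Matrix.det (Matrix.of fun i j : Fin (m.toNat + 1) =>
        f' ((i : ℤ) + (j : ℤ) - m)) = (-1) ^ Nat.choose (m + 1).toNat 2) ∧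
    (∀ n : ℕ, 1 ≤ n →
      Matrix.det (Matrix.of fun i j : Fin (((n : ℤ) + m).toNat + 1) =>
          f' ((i : ℤ) + (j : ℤ) - m)) =
        (-1) ^ Nat.choose (m + 1).toNat 2 * a ^ n *
          Matrix.det (Matrix.of fun i j : Fin n =>
            g' ((i : ℤ) + (j : ℤ) + m - (p : ℤ) + 2))) := by
  obtain rfl : f' = intCoeff f := funext hf'
  obtain rfl : g' = intCoeff g := funext hg'
  have hv : constantCoeff (C a * X ^ p * g) = 0 := by
    simp [zero_pow (by omega : p ≠ 0)]
  have hdet := det_hankel_intCoeff_of_mul_one_sub hv hf hm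
  refine ⟨fun n hn => ?_, fun hm0 => ?_, fun n _ => ?_⟩
  · exact det_eq_zero_of_row_eq_zero 0 fun j =>
      intCoeff_of_neg f (by simp only [Fin.val_zero]; omega)
  · rw [show m.toNat + 1 = (m + 1).toNat + 0 by omega, hdet]
    simp
  · have hG : (of fun i j : Fin n => intCoeff (C a * X ^ p * g) (i + j + m + 2)) =
        a • of fun i j : Fin n => intCoeff g (i + j + m - p + 2) := by
      ext i j
      rw [of_apply, intCoeff_C_mul_X_pow_mul, Matrix.smul_apply, of_apply, smul_eq_mul]
      ring_nf
    rw [show ((n : ℤ) + m).toNat + 1 = (m + 1).toNat + n by omega, hdet, hG, det_smul,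
      Fintype.card_fin]
    ring

/-- Lemma 2.1: if `f = 1/(1 − a x^p g(x))` with `g₀ = 1`, `p ≥ 1` and `m ≥ −1`, sequences
being extended by zero to negative indices, then the shifted Hankel determinants satisfy
`det(f_{i+j−m})_{i,j=0}^n = 0` for `n < m`, `det(f_{i+j−m})_{i,j=0}^m = (−1)^{C(m+1,2)}`,
and `det(f_{i+j−m})_{i,j=0}^{n+m} = (−1)^{C(m+1,2)} aⁿ det(g_{i+j+m−p+2})_{i,j=0}^{n−1}`
for `n ≥ 1`. -/
theorem hankel_lemma_cfrac_step {K : Type*} [Field K] (a : K) (m : ℤ) (hm : -1 ≤ m)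
    (p : ℕ) (hp : 1 ≤ p) (f g : PowerSeries K)
    (hg0 : PowerSeries.coeff 0 g = 1)
    (hf : f * (1 - PowerSeries.C a * PowerSeries.X ^ p * g) = 1)
    (f' g' : ℤ → K)
    (hf' : ∀ n : ℤ, f' n = if 0 ≤ n then PowerSeries.coeff n.toNat f else 0)
    (hg' : ∀ n : ℤ, g' n = if 0 ≤ n then PowerSeries.coeff n.toNat g else 0) :
    (∀ n : ℕ, (n : ℤ) < m →
      Matrix.det (Matrix.of fun i j : Fin (n + 1) =>
        f' ((i : ℤ) + (j : ℤ) - m)) = 0) ∧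
    (0 ≤ m →
      Matrix.det (Matrix.of fun i j : Fin (m.toNat + 1) =>
        f' ((i : ℤ) + (j : ℤ) - m)) = (-1) ^ Nat.choose (m + 1).toNat 2) ∧
    (∀ n : ℕ, 1 ≤ n →
      Matrix.det (Matrix.of fun i j : Fin (((n : ℤ) + m).toNat + 1) =>
          f' ((i : ℤ) + (j : ℤ) - m)) =
        (-1) ^ Nat.choose (m + 1).toNat 2 * a ^ n *
          Matrix.det (Matrix.of fun i j : Fin n =>
            g' ((i : ℤ) + (j : ℤ) + m - (p : ℤ) + 2))) :=
  hankel_lemma_cfrac_step_general a m hm p hp f g hf f' g' hf' hg'
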